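/- For a square tiled matrix of size p × p with p > 1, the critical path length of the tiled FlatTree algorithm (with TT kernels) equals 22p − 24. -/

import Mathlib

namespace TiledQR

/-- An elimination `elim(i, piv, k)`: tile `(i, k)` is zeroed out by an orthogonal
transformation combining row `i` with pivot row `piv`. -/
structure Elim where
  i : ℕ
  piv : ℕ
  k : ℕ
deriving DecidableEq

/-- `Before L e f` : the elimination `e` occurs strictly before `f` in the list `L`. -/
def Before (L : List Elim) (e f : Elim) : Prop :=
  ∃ a b : Fin L.length, (a : ℕ) < b ∧ L.get a = e ∧ L.get b = f

/-- `L` is a valid elimination list for a `p × q` tiled matrix: it contains exactly one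
elimination for every sub-diagonal tile `(i, k)` (`1 ≤ k ≤ min p q`, `k < i ≤ p`);
every elimination `elim(i, piv, k)` comes after all eliminations `elim(i, *, k')` and
`elim(piv, *, k')` with `k' < k`, and before the elimination `elim(piv, *, k)` of its
pivot row. -/
def ValidElimList (p q : ℕ) (L : List Elim) : Prop :=
  L.Nodup ∧
  (∀ e ∈ L, 1 ≤ e.k ∧ e.k ≤ min p q ∧ e.k < e.i ∧ e.i ≤ p ∧
      1 ≤ e.piv ∧ e.piv ≤ p ∧ e.piv ≠ e.i) ∧
  (∀ i k, 1 ≤ k → k ≤ min p q → k < i → i ≤ p → ∃! piv, Elim.mk i piv k ∈ L) ∧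
  (∀ a b : Fin L.length, (L.get b).k < (L.get a).k →
      ((L.get b).i = (L.get a).i ∨ (L.get b).i = (L.get a).piv) → (b : ℕ) < a) ∧
  (∀ a b : Fin L.length, (L.get b).k = (L.get a).k →
      (L.get b).i = (L.get a).piv → (a : ℕ) < b)

/-- The tasks of the tiled QR factorization with TT (triangle-on-top-of-triangle)
kernels. -/
inductive Task where
  | GEQRT (r k : ℕ)
  | UNMQR (r k j : ℕ)
  | TTQRT (i piv k : ℕ)
  | TTMQR (i piv k j : ℕ)
deriving DecidableEq

/-- Weights of the TT kernels, the unit being `n_b ^ 3 / 3` flops. -/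
def weight : Task → ℕ
  | .GEQRT _ _ => 4
  | .UNMQR _ _ _ => 6
  | .TTQRT _ _ _ => 2
  | .TTMQR _ _ _ _ => 6

/-- The tasks associated with a `p × q` tiled matrix and an elimination list `L`:
a factorization `GEQRT(r, k)` and updates `UNMQR(r, k, j)` (`k < j ≤ q`) for every tile
`(r, k)` with `k ≤ r ≤ p`, and, for every elimination `elim(i, piv, k)` of `L`, a task
`TTQRT(i, piv, k)` and updates `TTMQR(i, piv, k, j)` for `k < j ≤ q`. -/
def InTasks (p q : ℕ) (L : List Elim) : Task → Prop
  | .GEQRT r k => 1 ≤ k ∧ k ≤ min p q ∧ k ≤ r ∧ r ≤ p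
  | .UNMQR r k j => 1 ≤ k ∧ k ≤ min p q ∧ k ≤ r ∧ r ≤ p ∧ k < j ∧ j ≤ q
  | .TTQRT i piv k => Elim.mk i piv k ∈ L
  | .TTMQR i piv k j => Elim.mk i piv k ∈ L ∧ k < j ∧ j ≤ q

/-- The precedence (dependence) relation between the TT tasks.  Besides the flow
dependencies of the kernels, two tasks reading and writing a common tile
(a pivot tile reused by several eliminations of a column, or a pivot tile that is
subsequently zeroed out) are serialized in the order of the elimination list. -/
inductive Prec (L : List Elim) : Task → Task → Prop
  | geqrt_unmqr (r k j : ℕ) :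
      Prec L (.GEQRT r k) (.UNMQR r k j)
  | geqrt_ttqrt_row (i piv k : ℕ) :
      Prec L (.GEQRT i k) (.TTQRT i piv k)
  | geqrt_ttqrt_piv (i piv k : ℕ) :
      Prec L (.GEQRT piv k) (.TTQRT i piv k)
  | ttqrt_ttmqr (i piv k j : ℕ) :
      Prec L (.TTQRT i piv k) (.TTMQR i piv k j)
  | unmqr_ttmqr_row (i piv k j : ℕ) :
      Prec L (.UNMQR i k j) (.TTMQR i piv k j)
  | unmqr_ttmqr_piv (i piv k j : ℕ) :
      Prec L (.UNMQR piv k j) (.TTMQR i piv k j)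
  | ttmqr_geqrt (a b i k : ℕ) : 2 ≤ k → (a = i ∨ b = i) →
      Prec L (.TTMQR a b (k - 1) k) (.GEQRT i k)
  | ttqrt_serial (i i' piv k : ℕ) :
      Before L (Elim.mk i piv k) (Elim.mk i' piv k) →
      Prec L (.TTQRT i piv k) (.TTQRT i' piv k)
  | ttmqr_serial (i i' piv k j : ℕ) :
      Before L (Elim.mk i piv k) (Elim.mk i' piv k) →
      Prec L (.TTMQR i piv k j) (.TTMQR i' piv k j)
  | ttqrt_pivot_use (a i piv k : ℕ) :
      Prec L (.TTQRT a i k) (.TTQRT i piv k)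
  | ttmqr_pivot_use (a i piv k j : ℕ) :
      Prec L (.TTMQR a i k j) (.TTMQR i piv k j)

/-- A path in the weighted task DAG. -/
def IsPath (p q : ℕ) (L : List Elim) (path : List Task) : Prop :=
  (∀ t ∈ path, InTasks p q L t) ∧ path.Chain' (Prec L)

/-- The critical path length of the tiled algorithm given by the elimination list `L`:
the maximum total weight of a path in the weighted task DAG (equivalently, the makespan
of the earliest-start schedule with unboundedly many processors). -/
noncomputable def cpLength (p q : ℕ) (L : List Elim) : ℕ :=
  sSup { w : ℕ | ∃ path : List Task, IsPath p q L path ∧ w = (path.map weight).sum }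
/-- The FlatTree (Sameh-Kuck) elimination list: all eliminations of column `k` use the
diagonal row `k` as pivot; eliminations are listed column by column and, within a
column, by increasing row index. -/
def flatTreeList (p q : ℕ) : List Elim :=
  (List.range' 1 (min p q)).flatMap fun k =>
    (List.range' (k + 1) (p - k)).map fun i => Elim.mk i k k

/-! In FlatTree every elimination of column `k` uses row `k` as pivot, so the eliminations of a
column and their updates are serialized row after row. A heaviest path therefore runs through the
updates `TTMQR(i, 1, 1, 2)` for `i = 2, …, p` and then along the last row, gaining
`4 + 6 + 6 = 16` (GEQRT, UNMQR, TTMQR) per column; its weight is `22p - 24`. Conversely, the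
completion times of the as-soon-as-possible schedule have a closed form, which increases along
every edge by at least the weight of its target and never exceeds `22p - 24`. -/

theorem sum_map_le_of_isChain {α : Type*} {R : α → α → Prop} {S : Set α}
    {w f : α → ℕ} {B : ℕ} (hw : ∀ t ∈ S, w t ≤ f t)
    (hR : ∀ t ∈ S, ∀ t' ∈ S, R t t' → f t + w t' ≤ f t') (hB : ∀ t ∈ S, f t ≤ B)
    {l : List α} (hS : ∀ t ∈ l, t ∈ S) (hl : l.IsChain R) : (l.map w).sum ≤ B := by
  suffices key : ∀ u l, (∀ t ∈ u :: l, t ∈ S) → (u :: l).IsChain R →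
      f u + (l.map w).sum ≤ B by
    cases l with
    | nil => simp
    | cons u l =>
      have := key u l hS hl
      have := hw u (hS u (by simp))
      simp only [List.map_cons, List.sum_cons]
      omega
  intro u l
  induction l generalizing u with
  | nil => intro hS _; simpa using hB u (hS u (by simp))
  | cons v l ih =>
    intro hS hl
    have huv := hR u (hS u (by simp)) v (hS v (by simp)) (List.rel_of_isChain_cons_cons hl)
    have := ih v (fun t ht => hS t (List.mem_cons_of_mem u ht)) hl.tail
    simp only [List.map_cons, List.sum_cons]
    omega

theorem cpLength_eq_of_isPath {p q : ℕ} {L : List Elim} {B : ℕ}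
    (hle : ∀ path, IsPath p q L path → (path.map weight).sum ≤ B)
    (hex : ∃ path, IsPath p q L path ∧ (path.map weight).sum = B) : cpLength p q L = B := by
  obtain ⟨path, hpath, hsum⟩ := hex
  have hB : ∀ w ∈ {w | ∃ path, IsPath p q L path ∧ w = (path.map weight).sum}, w ≤ B := by
    rintro _ ⟨path', hpath', rfl⟩
    exact hle path' hpath'
  exact le_antisymm (csSup_le ⟨_, path, hpath, rfl⟩ hB) (le_csSup ⟨B, hB⟩ ⟨path, hpath, hsum.symm⟩)

theorem before_iff_of_pairwise {β : Type*} [LinearOrder β] {g : Elim → β} {L : List Elim}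
    (hL : L.Pairwise fun e f => g e < g f) {e f : Elim} :
    Before L e f ↔ e ∈ L ∧ f ∈ L ∧ g e < g f := by
  constructor
  · rintro ⟨a, b, hab, rfl, rfl⟩
    exact ⟨L.get_mem a, L.get_mem b, List.pairwise_iff_get.1 hL a b hab⟩
  · rintro ⟨he, hf, hlt⟩
    obtain ⟨a, rfl⟩ := List.mem_iff_get.1 he
    obtain ⟨b, rfl⟩ := List.mem_iff_get.1 hf
    rcases lt_trichotomy (a : ℕ) b with hab | hab | hab
    · exact ⟨a, b, hab, rfl, rfl⟩
    · exact absurd hlt (by rw [Fin.ext hab]; exact lt_irrefl _)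
    · exact absurd (List.pairwise_iff_get.1 hL b a hab) hlt.asymm

theorem mem_flatTreeList {p q i piv k : ℕ} :
    Elim.mk i piv k ∈ flatTreeList p q ↔ piv = k ∧ 1 ≤ k ∧ k ≤ min p q ∧ k < i ∧ i ≤ p := by
  simp only [flatTreeList, List.mem_flatMap, List.mem_map, List.mem_range'_1, Elim.mk.injEq]
  constructor
  · rintro ⟨k, hk, i, hi, rfl, rfl, rfl⟩
    omega
  · rintro ⟨rfl, hk₁, hk₂, hi₁, hi₂⟩
    exact ⟨piv, ⟨hk₁, by omega⟩, i, ⟨hi₁, by omega⟩, rfl, rfl, rfl⟩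

theorem pairwise_flatTreeList (p q : ℕ) :
    (flatTreeList p q).Pairwise fun e f => toLex (e.k, e.i) < toLex (f.k, f.i) := by
  simp only [flatTreeList, List.pairwise_flatMap, List.pairwise_map, List.mem_map,
    Prod.Lex.toLex_lt_toLex]
  refine ⟨fun k _ => (List.pairwise_lt_range' ..).imp (.inr ⟨trivial, ·⟩),
    (List.pairwise_lt_range' ..).imp fun hk => ?_⟩
  rintro _ ⟨_, _, rfl⟩ _ ⟨_, _, rfl⟩
  exact .inl hk

theorem before_flatTreeList_iff {p q : ℕ} {e f : Elim} :
    Before (flatTreeList p q) e f ↔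
      e ∈ flatTreeList p q ∧ f ∈ flatTreeList p q ∧ toLex (e.k, e.i) < toLex (f.k, f.i) :=
  before_iff_of_pairwise (pairwise_flatTreeList p q)

theorem Prec.ttmqr_geqrt_succ (L : List Elim) (i piv k : ℕ) (hk : 1 ≤ k) :
    Prec L (.TTMQR i piv k (k + 1)) (.GEQRT i (k + 1)) := by
  simpa using Prec.ttmqr_geqrt (L := L) i piv i (k + 1) (by omega) (.inl rfl)

section UpperBound

/-- The completion times of the as-soon-as-possible schedule of FlatTree. -/
def finishTime : Task → ℕ
  | .GEQRT r k => if k ≤ 1 then 4 else 22 * k - 24 + 6 * (r - k)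
  | .UNMQR r k _ => if k ≤ 1 then 10 else 22 * k - 18 + 6 * (r - k)
  | .TTQRT i _ k => if k ≤ 1 then 2 * i + 2 else 22 * k - 22 + 6 * (i - k)
  | .TTMQR i _ k _ => if k ≤ 1 then 6 * i + 4 else 22 * k - 12 + 6 * (i - k)

variable {p : ℕ} {t t' : Task}

theorem weight_le_finishTime (ht : InTasks p p (flatTreeList p p) t) :
    weight t ≤ finishTime t := by
  cases t <;> simp only [InTasks, mem_flatTreeList] at ht <;>
    simp only [weight, finishTime] <;> split_ifs <;> omega

theorem finishTime_le (hp : 1 < p) (ht : InTasks p p (flatTreeList p p) t) :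
    finishTime t ≤ 22 * p - 24 := by
  cases t <;> simp only [InTasks, mem_flatTreeList] at ht <;>
    simp only [finishTime] <;> split_ifs <;> omega

theorem finishTime_add_weight_le (ht : InTasks p p (flatTreeList p p) t)
    (ht' : InTasks p p (flatTreeList p p) t') (hprec : Prec (flatTreeList p p) t t') :
    finishTime t + weight t' ≤ finishTime t' := by
  -- the serialization edges of a column follow the row order, by the lexicographic order of
  -- the list; the pivot-use edges cannot occur, since no pivot row is eliminated in its column
  have hrow : ∀ {i i' piv k}, Before (flatTreeList p p) ⟨i, piv, k⟩ ⟨i', piv, k⟩ → i < i' :=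
    fun h => by simpa [Prod.Lex.toLex_lt_toLex] using (before_flatTreeList_iff.1 h).2.2
  cases hprec with
  | ttqrt_serial _ _ _ _ hb | ttmqr_serial _ _ _ _ _ hb =>
    have := hrow hb
    simp only [InTasks, mem_flatTreeList] at ht ht'
    simp only [finishTime, weight]
    split_ifs <;> omega
  | _ =>
    simp only [InTasks, mem_flatTreeList] at ht ht'
    simp only [finishTime, weight]
    split_ifs <;> omega

theorem sum_weight_le_of_isPath (hp : 1 < p) {path : List Task}
    (h : IsPath p p (flatTreeList p p) path) : (path.map weight).sum ≤ 22 * p - 24 :=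
  sum_map_le_of_isChain (S := {t | InTasks p p (flatTreeList p p) t})
    (fun _ => weight_le_finishTime) (fun _ ht _ ht' => finishTime_add_weight_le ht ht')
    (fun _ => finishTime_le hp) h.1 h.2

end UpperBound

section CriticalPath

def lastRowPath (p : ℕ) : ℕ → ℕ → List Task
  | k, 0 => [.GEQRT p k]
  | k, n + 1 => .GEQRT p k :: .UNMQR p k (k + 1) :: .TTMQR p k k (k + 1) ::
      lastRowPath p (k + 1) n

theorem lastRowPath_head? (p k n : ℕ) : (lastRowPath p k n).head? = some (.GEQRT p k) := by
  cases n <;> rfl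

theorem sum_weight_lastRowPath (p k n : ℕ) :
    ((lastRowPath p k n).map weight).sum = 4 + 16 * n := by
  induction n generalizing k with
  | zero => rfl
  | succ n ih =>
    simp only [lastRowPath, List.map_cons, List.sum_cons, weight, ih]
    ring

theorem isChain_lastRowPath (p : ℕ) {k : ℕ} (n : ℕ) (hk : 1 ≤ k) :
    (lastRowPath p k n).IsChain (Prec (flatTreeList p p)) := by
  induction n generalizing k with
  | zero => exact List.isChain_singleton _
  | succ n ih =>
    refine .cons_cons (.geqrt_unmqr ..) (.cons_cons (.unmqr_ttmqr_row ..) ?_)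
    refine List.isChain_cons.2 ⟨?_, ih (by omega)⟩
    rw [lastRowPath_head?]
    rintro _ ⟨⟩
    exact .ttmqr_geqrt_succ _ _ _ _ hk

theorem inTasks_of_mem_lastRowPath {p k n : ℕ} (hk : 1 ≤ k) (hkn : k + n ≤ p) {t : Task}
    (ht : t ∈ lastRowPath p k n) : InTasks p p (flatTreeList p p) t := by
  induction n generalizing k with
  | zero =>
    obtain rfl := List.mem_singleton.1 ht
    exact ⟨hk, by omega, by omega, le_rfl⟩
  | succ n ih =>
    simp only [lastRowPath, List.mem_cons] at ht
    rcases ht with rfl | rfl | rfl | ht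
    · exact ⟨hk, by omega, by omega, le_rfl⟩
    · exact ⟨hk, by omega, by omega, le_rfl, by omega, by omega⟩
    · exact ⟨mem_flatTreeList.2 ⟨rfl, hk, by omega, by omega, le_rfl⟩, by omega, by omega⟩
    · exact ih (by omega) (by omega) ht

def criticalPath (p : ℕ) : List Task :=
  .GEQRT 2 1 :: .UNMQR 2 1 2 ::
    ((List.range' 2 (p - 1)).map (.TTMQR · 1 1 2) ++ lastRowPath p 2 (p - 2))

variable {p : ℕ} (hp : 1 < p)
include hp

theorem sum_weight_criticalPath : ((criticalPath p).map weight).sum = 22 * p - 24 := by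
  simp only [criticalPath, List.map_cons, List.sum_cons, List.map_append, List.sum_append,
    List.map_map, Function.comp_def, weight, List.map_const', List.sum_replicate,
    List.length_range', smul_eq_mul, sum_weight_lastRowPath]
  omega

theorem inTasks_of_mem_criticalPath {t : Task} (ht : t ∈ criticalPath p) :
    InTasks p p (flatTreeList p p) t := by
  simp only [criticalPath, List.mem_cons, List.mem_append, List.mem_map, List.mem_range'_1] at ht
  rcases ht with rfl | rfl | ⟨i, hi, rfl⟩ | ht
  · exact ⟨le_rfl, by omega, by omega, by omega⟩
  · exact ⟨le_rfl, by omega, by omega, by omega, by omega, by omega⟩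
  · exact ⟨mem_flatTreeList.2 ⟨rfl, le_rfl, by omega, by omega, by omega⟩, by omega, by omega⟩
  · exact inTasks_of_mem_lastRowPath (by omega) (by omega) ht

theorem isChain_criticalPath : (criticalPath p).IsChain (Prec (flatTreeList p p)) := by
  obtain ⟨n, rfl⟩ : ∃ n, p = n + 2 := ⟨p - 2, by omega⟩
  have hupd : ((List.range' 2 (n + 1)).map (.TTMQR · 1 1 2)).IsChain
      (Prec (flatTreeList (n + 2) (n + 2))) := by
    rw [List.isChain_map]
    refine (List.isChain_range' 2 (n + 1) 1).imp_of_mem_imp fun i j hi hj hij => ?_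
    rw [List.mem_range'_1] at hi hj
    refine .ttmqr_serial _ _ _ _ _ (before_flatTreeList_iff.2 ⟨?_, ?_, ?_⟩)
    · exact mem_flatTreeList.2 ⟨rfl, le_rfl, by omega, by omega, by omega⟩
    · exact mem_flatTreeList.2 ⟨rfl, le_rfl, by omega, by omega, by omega⟩
    · exact Prod.Lex.toLex_lt_toLex.2 (.inr ⟨rfl, show i < j by omega⟩)
  have hjoin : ((List.range' 2 (n + 1)).map (Task.TTMQR · 1 1 2) ++
      lastRowPath (n + 2) 2 n).IsChain (Prec (flatTreeList (n + 2) (n + 2))) := by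
    refine List.isChain_append.2 ⟨hupd, isChain_lastRowPath _ _ (by omega), ?_⟩
    rw [List.range'_concat, List.map_append, lastRowPath_head?]
    rintro _ hx _ ⟨⟩
    simp only [List.map_cons, List.map_nil, List.getLast?_append, List.getLast?_singleton,
      Option.some_or, Option.mem_def, Option.some.injEq] at hx
    rw [← hx, show 2 + 1 * n = n + 2 by omega]
    exact .ttmqr_geqrt_succ _ _ _ _ le_rfl
  refine .cons_cons (.geqrt_unmqr ..) (List.isChain_cons.2 ⟨?_, by simpa using hjoin⟩)
  rw [show n + 2 - 1 = n + 1 by omega, List.range'_succ]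
  rintro _ ⟨⟩
  exact .unmqr_ttmqr_row ..

end CriticalPath

/-- **Theorem 2 (1), case `p = q > 1`.** The critical path length of the tiled
FlatTree algorithm (with TT kernels) on a square `p × p` matrix with `p > 1` is
`22p - 24`. -/
theorem flatTree_cpLength_square (p : ℕ) (hp : 1 < p) :
    cpLength p p (flatTreeList p p) = 22 * p - 24 :=
  cpLength_eq_of_isPath (fun _ => sum_weight_le_of_isPath hp)
    ⟨criticalPath p, ⟨fun _ => inTasks_of_mem_criticalPath hp, isChain_criticalPath hp⟩,
      sum_weight_criticalPath hp⟩

end TiledQR
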